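/- arXiv:2110.02073 — 2 statements merged into one kernel-verified Lean document; each statement's English description precedes it below -/
import Mathlib

section
/- Let T > 0, let α be a probability measure on ℝ with α([−T, 0]) = 1, and let z : ℝ → ℝ^m be Borel measurable with z(s) = 0 for all s < 0 and ∫_0^T ‖z(s)‖² ds < ∞. Then ∫_0^T ∫_ℝ ‖z(s + u)‖ dα(u) ds ≤ √T · (∫_0^T ‖z(s)‖² ds)^{1/2}. -/
open MeasureTheory
open scoped ENNReal

/-- Let `T > 0`, `α` a probability measure on `ℝ` with `α([−T, 0]) = 1`, and
`z : ℝ → ℝ^m` Borel measurable with `z(s) = 0` for `s < 0` and `∫_0^T ‖z(s)‖² ds < ∞`.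
Then `∫_0^T ∫_ℝ ‖z(s + u)‖ dα(u) ds ≤ √T · (∫_0^T ‖z(s)‖² ds)^{1/2}`. -/
theorem shift_integral_cauchy_schwarz (T : ℝ) (hT : 0 < T) (m : ℕ)
    (α : Measure ℝ) [IsProbabilityMeasure α] (hα : α (Set.Icc (-T) 0) = 1)
    (z : ℝ → EuclideanSpace ℝ (Fin m)) (hz : Measurable z)
    (hz0 : ∀ s < (0 : ℝ), z s = 0)
    (hzL2 : ∫⁻ s in Set.Icc (0 : ℝ) T, (‖z s‖₊ : ℝ≥0∞) ^ 2 < ⊤) :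
    ∫⁻ s in Set.Icc (0 : ℝ) T, (∫⁻ u, (‖z (s + u)‖₊ : ℝ≥0∞) ∂α) ≤
      ENNReal.ofReal (Real.sqrt T) *
        (∫⁻ s in Set.Icc (0 : ℝ) T, (‖z s‖₊ : ℝ≥0∞) ^ 2) ^ (1 / 2 : ℝ) := by
  set g : ℝ → ℝ≥0∞ := fun t => (Set.Icc (0:ℝ) T).indicator (fun t => (‖z t‖₊ : ℝ≥0∞)) t with hg
  have hgmeas : Measurable g := by
    apply Measurable.indicator
    · exact hz.nnnorm.coe_nnreal_ennreal
    · exact measurableSet_Icc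
  -- Step 1: bound the double integral by `∫_0^T ‖z‖`
  have step1 : ∫⁻ s in Set.Icc (0:ℝ) T, (∫⁻ u, (‖z (s + u)‖₊ : ℝ≥0∞) ∂α)
      ≤ ∫⁻ s in Set.Icc (0:ℝ) T, (‖z s‖₊ : ℝ≥0∞) := by
    have hae : ∀ᵐ u ∂α, u ∈ Set.Icc (-T) 0 := by
      have : α (Set.Icc (-T) 0)ᶜ = 0 := by
        rw [measure_compl measurableSet_Icc (measure_ne_top α _), hα, measure_univ, tsub_self]
      exact mem_ae_iff.2 this
    have key : ∀ s ∈ Set.Icc (0:ℝ) T, ∀ u ∈ Set.Icc (-T) (0:ℝ),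
        (‖z (s + u)‖₊ : ℝ≥0∞) ≤ g (s + u) := by
      intro s hs u hu
      rcases lt_or_ge (s + u) 0 with h | h
      · simp [hz0 _ h]
      · have hmem : s + u ∈ Set.Icc (0:ℝ) T := ⟨h, by linarith [hs.2, hu.2]⟩
        simp [hg, Set.indicator_of_mem hmem]
    calc ∫⁻ s in Set.Icc (0:ℝ) T, (∫⁻ u, (‖z (s + u)‖₊ : ℝ≥0∞) ∂α)
        ≤ ∫⁻ s in Set.Icc (0:ℝ) T, (∫⁻ u, g (s + u) ∂α) := by
          have hm : Measurable (Function.uncurry fun s u => g (s + u)) :=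
            hgmeas.comp measurable_add
          refine setLIntegral_mono_ae hm.lintegral_prod_right.aemeasurable ?_
          filter_upwards with s
          intro hs
          refine lintegral_mono_ae ?_
          filter_upwards [hae] with u hu
          exact key s hs u hu
      _ = ∫⁻ u, (∫⁻ s in Set.Icc (0:ℝ) T, g (s + u)) ∂α := by
          rw [lintegral_lintegral_swap]
          exact (hgmeas.comp measurable_add).aemeasurable
      _ ≤ ∫⁻ u, (∫⁻ s, g (s + u)) ∂α := by
          refine lintegral_mono fun u => ?_
          exact setLIntegral_le_lintegral _ _
      _ = ∫⁻ u, (∫⁻ s, g s) ∂α := by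
          congr 1; ext u
          exact lintegral_add_right_eq_self g u
      _ = ∫⁻ s, g s := by
          rw [lintegral_const]; simp
      _ = ∫⁻ s in Set.Icc (0:ℝ) T, (‖z s‖₊ : ℝ≥0∞) := by
          simp only [hg]
          rw [lintegral_indicator measurableSet_Icc]
  refine step1.trans ?_
  -- Step 2: Cauchy–Schwarz on `[0, T]`
  have hpq : Real.HolderConjugate 2 2 := by constructor <;> norm_num
  have hcs := ENNReal.lintegral_mul_le_Lp_mul_Lq (volume.restrict (Set.Icc (0:ℝ) T)) hpq
    (f := fun s => (‖z s‖₊ : ℝ≥0∞)) (g := fun _ => 1)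
    (hz.nnnorm.coe_nnreal_ennreal).aemeasurable aemeasurable_const
  simp only [Pi.mul_apply, mul_one, ENNReal.one_rpow, lintegral_const,
    Measure.restrict_apply_univ, one_mul] at hcs
  rw [Real.volume_Icc] at hcs
  calc ∫⁻ s in Set.Icc (0:ℝ) T, (‖z s‖₊ : ℝ≥0∞)
      ≤ (∫⁻ s in Set.Icc (0:ℝ) T, (‖z s‖₊ : ℝ≥0∞) ^ (2:ℝ)) ^ (1/2 : ℝ) *
        (ENNReal.ofReal (T - 0)) ^ (1/2 : ℝ) := hcs
    _ = ENNReal.ofReal (Real.sqrt T) *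
        (∫⁻ s in Set.Icc (0 : ℝ) T, (‖z s‖₊ : ℝ≥0∞) ^ 2) ^ (1 / 2 : ℝ) := by
        rw [mul_comm]
        congr 2
        · rw [sub_zero, ENNReal.ofReal_rpow_of_nonneg hT.le (by norm_num),
            Real.sqrt_eq_rpow]
        · refine lintegral_congr fun s => ?_
          rw [← ENNReal.rpow_natCast]
          norm_num
end

section
/- Let (Ω, F, P) be a probability space with a complete, right-continuous filtration (F_t)_{t∈[0,T]}, T > 0. Let (D) denote the set of adapted ℝ^k-valued processes φ with continuous paths such that the family {φ(τ) : τ a stopping time with values in [0, T]} is uniformly integrable, and set ‖φ‖₁ = sup{E‖φ(τ)‖ : τ a stopping time with values in [0, T]}. If (φⁿ)_{n≥1} is a sequence in (D) with ‖φⁿ − φᵐ‖₁ → 0 as n, m → ∞, then there exists φ ∈ (D) such that ‖φⁿ − φ‖₁ → 0 as n → ∞; i.e., (D) is complete under the norm ‖·‖₁. -/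
open MeasureTheory Filter Set Topology
open scoped ENNReal

/-! Pass to a subsequence `ψ j = φ (n j)` with `‖ψ (j+1) - ψ j‖₁ ≤ 4⁻ʲ`. Evaluating the increment
`ψ (j+1) - ψ j` at the stopping time where its norm first reaches `2⁻ʲ`, Markov's inequality shows
that it reaches this level on `[0, T]` with probability at most `2⁻ʲ`; by Borel–Cantelli almost
every path of `ψ` is uniformly Cauchy on `[0, T]`. The uniform limit, set to `0` on the exceptional
null set (which lies in every `ℱ t` by completeness), is continuous and adapted. Fatou's lemma at
each stopping time gives `‖φ n - φlim‖₁ → 0`, and uniform integrability passes to `φlim` since it is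
uniformly `‖·‖₁`-close to the uniformly integrable families `φ n`. -/

theorem exists_le_iff_forall_exists_lt {α : Type*} [TopologicalSpace α] {S D : Set α}
    {f : α → ℝ} {l : ℝ} (hS : IsCompact S) (hDS : D ⊆ S) (hSD : S ⊆ closure D)
    (hf : ContinuousOn f S) :
    (∃ s ∈ S, l ≤ f s) ↔ ∀ k : ℕ, ∃ q ∈ D, l - 1 / (k + 1) < f q := by
  constructor
  · rintro ⟨s, hs, hls⟩ k
    have hfs : f s ∈ closure (f '' D) :=
      ((hf s hs).mono hDS).mem_closure_image (hSD hs)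
    obtain ⟨_, hlt, q, hq, rfl⟩ := mem_closure_iff.1 hfs (Ioi (l - 1 / (k + 1))) isOpen_Ioi
      (show l - 1 / (k + 1) < f s by have : (0 : ℝ) < 1 / (k + 1) := (by positivity); linarith)
    exact ⟨q, hq, hlt⟩
  · intro h
    obtain ⟨q, hq, -⟩ := h 0
    obtain ⟨s, hs, hmax⟩ := hS.exists_isMaxOn ⟨q, hDS hq⟩ hf
    refine ⟨s, hs, not_lt.1 fun hlt => ?_⟩
    obtain ⟨k, hk⟩ := exists_nat_one_div_lt (sub_pos.2 hlt)
    obtain ⟨q, hq, hlq⟩ := h k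
    linarith [show f q ≤ f s from hmax (hDS hq)]

theorem Icc_subset_closure_insert_rat (a b : ℝ) :
    Icc a b ⊆ closure (insert b (Icc a b ∩ range ((↑) : ℚ → ℝ))) := by
  intro x hx
  rcases hx.2.eq_or_lt with rfl | hlt
  · exact subset_closure (mem_insert _ _)
  have hx' : x ∈ closure (Ioo x b ∩ range ((↑) : ℚ → ℝ)) := by
    rw [← closure_closure]
    refine closure_mono (Rat.denseRange_cast.open_subset_closure_inter isOpen_Ioo) ?_
    rw [closure_Ioo hlt.ne]
    exact left_mem_Icc.2 hlt.le
  refine closure_mono ((inter_subset_inter_left _ ?_).trans (subset_insert _ _)) hx'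
  exact Ioo_subset_Icc_self.trans (Icc_subset_Icc_left hx.1)

section

variable {Ω E : Type*} [NormedAddCommGroup E]

theorem uniformCauchySeqOn_of_eventually_norm_sub_lt {α : Type*} {F : ℕ → α → E} {S : Set α}
    (h : ∀ᶠ j in atTop, ∀ x ∈ S, ‖F (j + 1) x - F j x‖ < (1 / 2) ^ j) :
    UniformCauchySeqOn F atTop S := by
  obtain ⟨J, hJ⟩ := eventually_atTop.1 h
  have hdist : ∀ m n, J ≤ m → m ≤ n → ∀ x ∈ S, dist (F m x) (F n x) ≤ 2 * (1 / 2) ^ m := by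
    intro m n hm hmn x hx
    calc dist (F m x) (F n x) ≤ ∑ i ∈ Finset.Ico m n, (1 / 2 : ℝ) ^ i :=
          dist_le_Ico_sum_of_dist_le (f := fun i => F i x) hmn fun hmk _ => by
            rw [dist_comm, dist_eq_norm]
            exact (hJ _ (hm.trans hmk) x hx).le
      _ ≤ (1 / 2) ^ m / (1 - 1 / 2) := geom_sum_Ico_le_of_lt_one (by norm_num) (by norm_num)
      _ = 2 * (1 / 2) ^ m := by ring
  rw [Metric.uniformCauchySeqOn_iff]
  intro ε hε
  obtain ⟨M, hM⟩ := exists_pow_lt_of_lt_one (half_pos hε) (by norm_num : (1 / 2 : ℝ) < 1)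
  have hsmall : ∀ m ≥ max J M, 2 * (1 / 2 : ℝ) ^ m < ε := fun m hm => by
    have := pow_le_pow_of_le_one (by norm_num : (0 : ℝ) ≤ 1 / 2) (by norm_num)
      (le_of_max_le_right hm)
    linarith
  refine ⟨max J M, fun m hm n hn x hx => ?_⟩
  rcases le_total m n with hmn | hnm
  · exact (hdist m n (le_of_max_le_left hm) hmn x hx).trans_lt (hsmall m hm)
  · rw [dist_comm]
    exact (hdist n m (le_of_max_le_left hn) hnm x hx).trans_lt (hsmall n hn)

theorem exists_forall_measurableSet_ae_mem {ι : Type*} {mΩ : MeasurableSpace Ω} {P : Measure Ω}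
    {m : ι → MeasurableSpace Ω}
    (hcomplete : ∀ i, ∀ s : Set Ω, MeasurableSet s → P s = 0 → MeasurableSet[m i] s)
    {p : Ω → Prop} (h : ∀ᵐ ω ∂P, p ω) :
    ∃ G : Set Ω, (∀ i, MeasurableSet[m i] G) ∧ (∀ᵐ ω ∂P, ω ∈ G) ∧ ∀ ω ∈ G, p ω := by
  have hnull : P (toMeasurable P {ω | ¬p ω}) = 0 := by rw [measure_toMeasurable]; exact ae_iff.1 h
  refine ⟨(toMeasurable P {ω | ¬p ω})ᶜ,
    fun i => (hcomplete i _ (measurableSet_toMeasurable _ _) hnull).compl,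
    measure_eq_zero_iff_ae_notMem.1 hnull, fun ω hω => not_not.1 fun hp => hω ?_⟩
  exact subset_toMeasurable _ _ hp

theorem MeasureTheory.UniformIntegrable.of_forall_eLpNorm_sub_le {α ι : Type*}
    {mα : MeasurableSpace α} {μ : Measure α} {p : ℝ≥0∞} {f : ι → α → E} (hp : 1 ≤ p)
    (hf : ∀ i, AEStronglyMeasurable (f i) μ)
    (h : ∀ ε > 0, ∃ g : ι → α → E, UniformIntegrable g p μ ∧
      ∀ i, eLpNorm (f i - g i) p μ ≤ ENNReal.ofReal ε) :
    UniformIntegrable f p μ := by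
  refine ⟨hf, fun ε hε => ?_, ?_⟩
  · obtain ⟨g, ⟨hgm, hgUI, -⟩, hfg⟩ := h (ε / 2) (half_pos hε)
    obtain ⟨δ, hδ, hgδ⟩ := hgUI (half_pos hε)
    refine ⟨δ, hδ, fun i s hs hμs => ?_⟩
    calc eLpNorm (s.indicator (f i)) p μ
        = eLpNorm (s.indicator (f i - g i) + s.indicator (g i)) p μ := by
          rw [← indicator_add', sub_add_cancel]
      _ ≤ eLpNorm (s.indicator (f i - g i)) p μ + eLpNorm (s.indicator (g i)) p μ :=
          eLpNorm_add_le (((hf i).sub (hgm i)).indicator hs) ((hgm i).indicator hs) hp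
      _ ≤ ENNReal.ofReal (ε / 2) + ENNReal.ofReal (ε / 2) :=
          add_le_add ((eLpNorm_indicator_le _).trans (hfg i)) (hgδ i s hs hμs)
      _ = ENNReal.ofReal ε := by
          rw [← ENNReal.ofReal_add (by positivity) (by positivity), add_halves]
  · obtain ⟨g, ⟨hgm, -, C, hC⟩, hfg⟩ := h 1 one_pos
    refine ⟨C + 1, fun i => ?_⟩
    calc eLpNorm (f i) p μ = eLpNorm (f i - g i + g i) p μ := by rw [sub_add_cancel]
      _ ≤ eLpNorm (f i - g i) p μ + eLpNorm (g i) p μ :=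
          eLpNorm_add_le ((hf i).sub (hgm i)) (hgm i) hp
      _ ≤ ENNReal.ofReal 1 + C := add_le_add (hfg i) (hC i)
      _ = ↑(C + 1) := by rw [ENNReal.ofReal_one, add_comm, ENNReal.coe_add, ENNReal.coe_one]

theorem eLpNorm_one_le_ofReal_iff {α : Type*} {mα : MeasurableSpace α} {μ : Measure α}
    {f : α → E} (hf : Integrable f μ) {ε : ℝ} (hε : 0 ≤ ε) :
    eLpNorm f 1 μ ≤ ENNReal.ofReal ε ↔ ∫ x, ‖f x‖ ∂μ ≤ ε := by
  rw [eLpNorm_one_eq_lintegral_enorm, ← ofReal_integral_norm_eq_lintegral_enorm hf,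
    ENNReal.ofReal_le_ofReal_iff hε]

section HittingTime

variable {T l : ℝ} {X : ℝ → Ω → E} {ω : Ω}

open Classical in
noncomputable def hitTime (T : ℝ) (X : ℝ → Ω → E) (l : ℝ) (ω : Ω) : ℝ :=
  if ∃ t ∈ Icc 0 T, l ≤ ‖X t ω‖ then sInf {t ∈ Icc 0 T | l ≤ ‖X t ω‖} else T

theorem hitTime_mem_Icc (hT : 0 ≤ T) : hitTime T X l ω ∈ Icc 0 T := by
  unfold hitTime
  split_ifs with h
  · obtain ⟨t, ht, hl⟩ := h
    exact ⟨le_csInf ⟨t, ht, hl⟩ fun _ hs => hs.1.1,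
      csInf_le_of_le ⟨0, fun _ hs => hs.1.1⟩ ⟨ht, hl⟩ ht.2⟩
  · exact ⟨hT, le_rfl⟩

theorem hitTime_le {s : ℝ} (hs : s ∈ Icc 0 T) (hl : l ≤ ‖X s ω‖) : hitTime T X l ω ≤ s := by
  rw [hitTime, if_pos ⟨s, hs, hl⟩]
  exact csInf_le ⟨0, fun _ ht => ht.1.1⟩ ⟨hs, hl⟩

theorem le_norm_hitTime (hc : ContinuousOn (fun t => X t ω) (Icc 0 T))
    (h : ∃ t ∈ Icc 0 T, l ≤ ‖X t ω‖) : l ≤ ‖X (hitTime T X l ω) ω‖ := by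
  have hclosed : IsClosed {t ∈ Icc 0 T | l ≤ ‖X t ω‖} :=
    hc.norm.preimage_isClosed_of_isClosed isClosed_Icc isClosed_Ici
  rw [hitTime, if_pos h]
  exact (hclosed.csInf_mem h ⟨0, fun _ ht => ht.1.1⟩).2

theorem hitTime_le_iff (hc : ContinuousOn (fun t => X t ω) (Icc 0 T)) {t : ℝ} (htT : t < T) :
    hitTime T X l ω ≤ t ↔ ∃ s ∈ Icc 0 t, l ≤ ‖X s ω‖ := by
  constructor
  · intro hle
    by_cases h : ∃ s ∈ Icc 0 T, l ≤ ‖X s ω‖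
    · have h0 : 0 ≤ hitTime T X l ω := by
        rw [hitTime, if_pos h]
        exact le_csInf h fun _ hs => hs.1.1
      exact ⟨_, ⟨h0, hle⟩, le_norm_hitTime hc h⟩
    · rw [hitTime, if_neg h] at hle
      exact absurd htT hle.not_gt
  · rintro ⟨s, hs, hl⟩
    exact (hitTime_le ⟨hs.1, hs.2.trans htT.le⟩ hl).trans hs.2

theorem isStoppingTime_hitTime {mΩ : MeasurableSpace Ω} {ℱ : Filtration ℝ mΩ} (hT : 0 ≤ T)
    (hA : ∀ t ∈ Icc 0 T, StronglyMeasurable[ℱ t] (X t))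
    (hc : ∀ ω, ContinuousOn (fun t => X t ω) (Icc 0 T)) :
    IsStoppingTime ℱ (fun ω => (hitTime T X l ω : WithTop ℝ)) := by
  intro t
  simp only [WithTop.coe_le_coe]
  rcases lt_or_ge t 0 with ht0 | ht0
  · convert @MeasurableSet.empty _ (ℱ t)
    exact eq_empty_of_forall_notMem fun ω hω => (ht0.trans_le (hitTime_mem_Icc hT).1).not_ge hω
  rcases le_or_gt T t with hTt | htT
  · convert @MeasurableSet.univ _ (ℱ t)
    exact eq_univ_of_forall fun ω => (hitTime_mem_Icc hT).2.trans hTt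
  -- by continuity, `‖X‖` reaches `l` on `[0, t]` iff it comes arbitrarily close to `l` on the
  -- countable set `D`
  set D := insert t (Icc 0 t ∩ range ((↑) : ℚ → ℝ))
  have hDt : D ⊆ Icc 0 t := insert_subset (right_mem_Icc.2 ht0) inter_subset_left
  have hset : {ω | hitTime T X l ω ≤ t} = ⋂ k : ℕ, ⋃ q ∈ D, {ω | l - 1 / (k + 1) < ‖X q ω‖} := by
    ext ω
    simp only [mem_ofPred_eq, mem_iInter, mem_iUnion, exists_prop]
    rw [hitTime_le_iff (hc ω) htT, ← exists_le_iff_forall_exists_lt isCompact_Icc hDt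
      (Icc_subset_closure_insert_rat 0 t) ((hc ω).norm.mono (Icc_subset_Icc_right htT.le))]
  rw [hset]
  refine .iInter fun k => .biUnion ((countable_range _).mono inter_subset_right |>.insert t)
    fun q hq => ℱ.mono (hDt hq).2 _ ?_
  exact (hA q ⟨(hDt hq).1, (hDt hq).2.trans htT.le⟩).norm.measurable measurableSet_Ioi

theorem ofReal_mul_measure_le_eLpNorm_hitTime {mΩ : MeasurableSpace Ω} {P : Measure Ω}
    (hc : ∀ ω, ContinuousOn (fun t => X t ω) (Icc 0 T))
    (hX : AEStronglyMeasurable (fun ω => X (hitTime T X l ω) ω) P) :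
    ENNReal.ofReal l * P {ω | ∃ t ∈ Icc 0 T, l ≤ ‖X t ω‖} ≤
      eLpNorm (fun ω => X (hitTime T X l ω) ω) 1 P := by
  rw [eLpNorm_one_eq_lintegral_enorm]
  calc ENNReal.ofReal l * P {ω | ∃ t ∈ Icc 0 T, l ≤ ‖X t ω‖}
      ≤ ENNReal.ofReal l * P {ω | ENNReal.ofReal l ≤ ‖X (hitTime T X l ω) ω‖ₑ} := by
        refine mul_le_mul_right (measure_mono fun ω hω => ?_) _
        rw [mem_ofPred_eq, ← ofReal_norm]
        exact ENNReal.ofReal_le_ofReal (le_norm_hitTime (hc ω) hω)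
    _ ≤ ∫⁻ ω, ‖X (hitTime T X l ω) ω‖ₑ ∂P := mul_meas_ge_le_lintegral₀ hX.enorm _

theorem ae_eventually_forall_norm_lt {mΩ : MeasurableSpace Ω} {P : Measure Ω}
    {X : ℕ → ℝ → Ω → E} (hc : ∀ j ω, ContinuousOn (fun t => X j t ω) (Icc 0 T))
    (hX : ∀ j, AEStronglyMeasurable (fun ω => X j (hitTime T (X j) ((1 / 2) ^ j) ω) ω) P)
    (hsmall : ∀ j, eLpNorm (fun ω => X j (hitTime T (X j) ((1 / 2) ^ j) ω) ω) 1 P ≤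
      ENNReal.ofReal ((1 / 4) ^ j)) :
    ∀ᵐ ω ∂P, ∀ᶠ j in atTop, ∀ t ∈ Icc 0 T, ‖X j t ω‖ < (1 / 2) ^ j := by
  set A : ℕ → Set Ω := fun j => {ω | ∃ t ∈ Icc 0 T, (1 / 2) ^ j ≤ ‖X j t ω‖}
  have hA : ∀ j, P (A j) ≤ ENNReal.ofReal ((1 / 2) ^ j) := by
    intro j
    have hpos : ENNReal.ofReal ((1 / 2) ^ j) ≠ 0 := by simp
    refine (ENNReal.mul_le_mul_iff_right hpos ENNReal.ofReal_ne_top).1 ?_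
    calc ENNReal.ofReal ((1 / 2) ^ j) * P (A j)
        ≤ ENNReal.ofReal ((1 / 4) ^ j) :=
          (ofReal_mul_measure_le_eLpNorm_hitTime (hc j) (hX j)).trans (hsmall j)
      _ = ENNReal.ofReal ((1 / 2) ^ j) * ENNReal.ofReal ((1 / 2) ^ j) := by
          rw [← ENNReal.ofReal_mul (by positivity), ← mul_pow]
          norm_num
  have hsum : ∑' j, P (A j) ≠ ∞ := by
    refine ne_top_of_le_ne_top ?_ (ENNReal.tsum_le_tsum hA)
    rw [← ENNReal.ofReal_tsum_of_nonneg (fun j => by positivity) summable_geometric_two]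
    exact ENNReal.ofReal_ne_top
  filter_upwards [ae_eventually_notMem hsum] with ω hω
  filter_upwards [hω] with j hj t ht
  exact not_le.1 fun h => hj ⟨t, ht, h⟩

end HittingTime

section Limit

variable {T : ℝ}

theorem exists_adapted_continuousOn_ae_tendsto [CompleteSpace E] {mΩ : MeasurableSpace Ω}
    {P : Measure Ω} {ℱ : Filtration ℝ mΩ}
    (hcomplete : ∀ t : ℝ, ∀ s : Set Ω, MeasurableSet s → P s = 0 → MeasurableSet[ℱ t] s)
    {ψ : ℕ → ℝ → Ω → E} (hA : ∀ j, ∀ t ∈ Icc 0 T, StronglyMeasurable[ℱ t] (ψ j t))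
    (hc : ∀ j ω, ContinuousOn (fun t => ψ j t ω) (Icc 0 T))
    (hUC : ∀ᵐ ω ∂P, UniformCauchySeqOn (fun j t => ψ j t ω) atTop (Icc 0 T)) :
    ∃ ψlim : ℝ → Ω → E, (∀ t ∈ Icc 0 T, StronglyMeasurable[ℱ t] (ψlim t)) ∧
      (∀ ω, ContinuousOn (fun t => ψlim t ω) (Icc 0 T)) ∧
      ∀ᵐ ω ∂P, ∀ t ∈ Icc 0 T, Tendsto (fun j => ψ j t ω) atTop (𝓝 (ψlim t ω)) := by
  obtain ⟨G, hGm, hG, hGUC⟩ := exists_forall_measurableSet_ae_mem hcomplete hUC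
  set ψlim : ℝ → Ω → E := fun t => G.indicator fun ω => limUnder atTop fun j => ψ j t ω
  have hlim : ∀ ω ∈ G, ∀ t ∈ Icc 0 T, Tendsto (fun j => ψ j t ω) atTop (𝓝 (ψlim t ω)) := by
    intro ω hω t ht
    simp only [ψlim, indicator_of_mem hω]
    exact ((hGUC ω hω).cauchySeq ht).tendsto_limUnder
  refine ⟨ψlim, fun t ht => ?_, fun ω => ?_, hG.mono hlim⟩
  · refine stronglyMeasurable_of_tendsto atTop (fun j => (hA j t ht).indicator (hGm t))
      (tendsto_pi_nhds.2 fun ω => ?_)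
    by_cases hω : ω ∈ G
    · simpa only [indicator_of_mem hω] using hlim ω hω t ht
    · simp only [ψlim, indicator_of_notMem hω]
      exact tendsto_const_nhds
  · by_cases hω : ω ∈ G
    · exact ((hGUC ω hω).tendstoUniformlyOn_of_tendsto (hlim ω hω)).continuousOn
        (Frequently.of_forall fun j => hc j ω)
    · simp only [ψlim, indicator_of_notMem hω]
      exact continuousOn_const

abbrev IccStoppingTime {mΩ : MeasurableSpace Ω} (ℱ : Filtration ℝ mΩ) (T : ℝ) :=
  {τ : Ω → ℝ // IsStoppingTime ℱ (fun ω => (τ ω : WithTop ℝ)) ∧ ∀ ω, τ ω ∈ Icc 0 T}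

theorem ae_uniformCauchySeqOn_of_eLpNorm_sub_le {mΩ : MeasurableSpace Ω} {P : Measure Ω}
    {ℱ : Filtration ℝ mΩ} (hT : 0 ≤ T) {ψ : ℕ → ℝ → Ω → E}
    (hA : ∀ j, ∀ t ∈ Icc 0 T, StronglyMeasurable[ℱ t] (ψ j t))
    (hc : ∀ j ω, ContinuousOn (fun t => ψ j t ω) (Icc 0 T))
    (hmeas : ∀ j (τ : IccStoppingTime ℱ T), AEStronglyMeasurable (fun ω => ψ j (τ.1 ω) ω) P)
    (hfast : ∀ j (τ : IccStoppingTime ℱ T),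
      eLpNorm (fun ω => ψ (j + 1) (τ.1 ω) ω - ψ j (τ.1 ω) ω) 1 P ≤ ENNReal.ofReal ((1 / 4) ^ j)) :
    ∀ᵐ ω ∂P, UniformCauchySeqOn (fun j t => ψ j t ω) atTop (Icc 0 T) := by
  set X : ℕ → ℝ → Ω → E := fun j t ω => ψ (j + 1) t ω - ψ j t ω
  have hXc : ∀ j ω, ContinuousOn (fun t => X j t ω) (Icc 0 T) :=
    fun j ω => (hc (j + 1) ω).sub (hc j ω)
  let τ : ℕ → IccStoppingTime ℱ T := fun j =>
    ⟨hitTime T (X j) ((1 / 2) ^ j),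
      isStoppingTime_hitTime hT (fun t ht => (hA (j + 1) t ht).sub (hA j t ht)) (hXc j),
      fun _ => hitTime_mem_Icc hT⟩
  filter_upwards [ae_eventually_forall_norm_lt hXc
    (fun j => (hmeas (j + 1) (τ j)).sub (hmeas j (τ j))) (fun j => hfast j (τ j))] with ω hω
  exact uniformCauchySeqOn_of_eventually_norm_sub_lt hω

theorem exists_adapted_continuousOn_tendsto_eLpNorm [CompleteSpace E] {mΩ : MeasurableSpace Ω}
    {P : Measure Ω} {ℱ : Filtration ℝ mΩ}
    (hcomplete : ∀ t : ℝ, ∀ s : Set Ω, MeasurableSet s → P s = 0 → MeasurableSet[ℱ t] s)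
    (hT : 0 ≤ T) {φ : ℕ → ℝ → Ω → E}
    (hA : ∀ n, ∀ t ∈ Icc 0 T, StronglyMeasurable[ℱ t] (φ n t))
    (hc : ∀ n ω, ContinuousOn (fun t => φ n t ω) (Icc 0 T))
    (hmeas : ∀ n (τ : IccStoppingTime ℱ T), AEStronglyMeasurable (fun ω => φ n (τ.1 ω) ω) P)
    (hCauchy : ∀ ε > 0, ∃ N, ∀ n ≥ N, ∀ m ≥ N, ∀ τ : IccStoppingTime ℱ T,
      eLpNorm (fun ω => φ n (τ.1 ω) ω - φ m (τ.1 ω) ω) 1 P ≤ ENNReal.ofReal ε) :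
    ∃ φlim : ℝ → Ω → E, (∀ t ∈ Icc 0 T, StronglyMeasurable[ℱ t] (φlim t)) ∧
      (∀ ω, ContinuousOn (fun t => φlim t ω) (Icc 0 T)) ∧
      (∀ τ : IccStoppingTime ℱ T, AEStronglyMeasurable (fun ω => φlim (τ.1 ω) ω) P) ∧
      ∀ ε > 0, ∃ N, ∀ n ≥ N, ∀ τ : IccStoppingTime ℱ T,
        eLpNorm (fun ω => φ n (τ.1 ω) ω - φlim (τ.1 ω) ω) 1 P ≤ ENNReal.ofReal ε := by
  have hfast (j : ℕ) : ∀ᶠ k in atTop, ∀ n ≥ k, ∀ m ≥ k, ∀ τ : IccStoppingTime ℱ T,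
      eLpNorm (fun ω => φ n (τ.1 ω) ω - φ m (τ.1 ω) ω) 1 P ≤ ENNReal.ofReal ((1 / 4) ^ j) := by
    obtain ⟨N, hN⟩ := hCauchy _ (by positivity : (0 : ℝ) < (1 / 4) ^ j)
    filter_upwards [eventually_ge_atTop N] with k hk n hn m hm
    exact hN n (hk.trans hn) m (hk.trans hm)
  obtain ⟨ns, hns_mono, hns⟩ := extraction_forall_of_eventually hfast
  obtain ⟨φlim, hAlim, hClim, hlim⟩ := exists_adapted_continuousOn_ae_tendsto hcomplete
    (fun j => hA (ns j)) (fun j => hc (ns j))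
    (ae_uniformCauchySeqOn_of_eLpNorm_sub_le hT (fun j => hA (ns j)) (fun j => hc (ns j))
      (fun j => hmeas (ns j)) (fun j τ => hns j _ (hns_mono j.lt_succ_self).le _ le_rfl τ))
  have hlimτ (τ : IccStoppingTime ℱ T) :
      ∀ᵐ ω ∂P, Tendsto (fun j => φ (ns j) (τ.1 ω) ω) atTop (𝓝 (φlim (τ.1 ω) ω)) :=
    hlim.mono fun ω h => h _ (τ.2.2 ω)
  refine ⟨φlim, hAlim, hClim,
    fun τ => aestronglyMeasurable_of_tendsto_ae atTop (fun j => hmeas (ns j) τ) (hlimτ τ),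
    fun ε hε => ?_⟩
  obtain ⟨N, hN⟩ := hCauchy ε hε
  refine ⟨N, fun n hn τ => Lp.eLpNorm_le_of_ae_tendsto
    (f := fun j ω => φ n (τ.1 ω) ω - φ (ns j) (τ.1 ω) ω) ?_
    (fun j => (hmeas n τ).sub (hmeas (ns j) τ))
    ((hlimτ τ).mono fun ω h => tendsto_const_nhds.sub h)⟩
  filter_upwards [hns_mono.tendsto_atTop.eventually_ge_atTop N] with j hj using hN n hn _ hj τ

end Limit

end

theorem classD_complete_general {Ω : Type*} {mΩ : MeasurableSpace Ω}
    (P : Measure Ω) (T : ℝ) (hT : 0 < T) (k : ℕ)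
    (ℱ : Filtration ℝ mΩ)
    (hcomplete : ∀ t : ℝ, ∀ s : Set Ω, MeasurableSet s → P s = 0 → MeasurableSet[ℱ t] s)
    (φ : ℕ → ℝ → Ω → EuclideanSpace ℝ (Fin k))
    (hAdapted : ∀ n, ∀ t ∈ Set.Icc (0 : ℝ) T, StronglyMeasurable[ℱ t] (φ n t))
    (hCont : ∀ n ω, ContinuousOn (fun t => φ n t ω) (Set.Icc (0 : ℝ) T))
    (hUI : ∀ n, UniformIntegrable
      (fun τ : {τ : Ω → ℝ // IsStoppingTime ℱ (fun ω => (τ ω : WithTop ℝ)) ∧ ∀ ω, τ ω ∈ Set.Icc (0 : ℝ) T} =>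
        fun ω => φ n (τ.1 ω) ω) 1 P)
    (hCauchy : ∀ ε : ℝ, 0 < ε → ∃ N : ℕ, ∀ n ≥ N, ∀ m ≥ N,
      ∀ τ : Ω → ℝ, IsStoppingTime ℱ (fun ω => (τ ω : WithTop ℝ)) → (∀ ω, τ ω ∈ Set.Icc (0 : ℝ) T) →
        ∫ ω, ‖φ n (τ ω) ω - φ m (τ ω) ω‖ ∂P ≤ ε) :
    ∃ φlim : ℝ → Ω → EuclideanSpace ℝ (Fin k),
      (∀ t ∈ Set.Icc (0 : ℝ) T, StronglyMeasurable[ℱ t] (φlim t)) ∧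
      (∀ ω, ContinuousOn (fun t => φlim t ω) (Set.Icc (0 : ℝ) T)) ∧
      UniformIntegrable
        (fun τ : {τ : Ω → ℝ // IsStoppingTime ℱ (fun ω => (τ ω : WithTop ℝ)) ∧ ∀ ω, τ ω ∈ Set.Icc (0 : ℝ) T} =>
          fun ω => φlim (τ.1 ω) ω) 1 P ∧
      (∀ ε : ℝ, 0 < ε → ∃ N : ℕ, ∀ n ≥ N,
        ∀ τ : Ω → ℝ, IsStoppingTime ℱ (fun ω => (τ ω : WithTop ℝ)) → (∀ ω, τ ω ∈ Set.Icc (0 : ℝ) T) →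
          ∫ ω, ‖φ n (τ ω) ω - φlim (τ ω) ω‖ ∂P ≤ ε) := by
  have hMem (n : ℕ) (τ : IccStoppingTime ℱ T) : MemLp (fun ω => φ n (τ.1 ω) ω) 1 P := (hUI n).memLp τ
  have hCauchy' : ∀ ε > 0, ∃ N, ∀ n ≥ N, ∀ m ≥ N, ∀ τ : IccStoppingTime ℱ T,
      eLpNorm (fun ω => φ n (τ.1 ω) ω - φ m (τ.1 ω) ω) 1 P ≤ ENNReal.ofReal ε := by
    intro ε hε
    obtain ⟨N, hN⟩ := hCauchy ε hε
    exact ⟨N, fun n hn m hm τ => (eLpNorm_one_le_ofReal_iff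
      (memLp_one_iff_integrable.1 ((hMem n τ).sub (hMem m τ))) hε.le).2
      (hN n hn m hm τ.1 τ.2.1 τ.2.2)⟩
  obtain ⟨φlim, hAlim, hClim, hmeas, hconv⟩ := exists_adapted_continuousOn_tendsto_eLpNorm
    hcomplete hT.le hAdapted hCont (fun n τ => (hMem n τ).1) hCauchy'
  have hUIlim : UniformIntegrable (fun τ : IccStoppingTime ℱ T => fun ω => φlim (τ.1 ω) ω) 1 P := by
    refine .of_forall_eLpNorm_sub_le le_rfl hmeas fun ε hε => ?_
    obtain ⟨N, hN⟩ := hconv ε hε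
    exact ⟨_, hUI N, fun τ => by rw [eLpNorm_sub_comm]; exact hN N le_rfl τ⟩
  refine ⟨φlim, hAlim, hClim, hUIlim, fun ε hε => ?_⟩
  obtain ⟨N, hN⟩ := hconv ε hε
  refine ⟨N, fun n hn τ hτ hτT => ?_⟩
  set τ' : IccStoppingTime ℱ T := ⟨τ, hτ, hτT⟩
  exact (eLpNorm_one_le_ofReal_iff
    (memLp_one_iff_integrable.1 ((hMem n τ').sub (hUIlim.memLp τ'))) hε.le).1 (hN n hn τ')

/-- Completeness of the class (D) under the norm
`‖φ‖₁ = sup { E‖φ(τ)‖ : τ a stopping time with values in [0, T] }`: on a probability space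
with a complete, right-continuous filtration, any sequence of adapted continuous
`ℝ^k`-valued processes whose families of values at `[0,T]`-valued stopping times are
uniformly integrable and which is Cauchy for `‖·‖₁` converges in `‖·‖₁` to a limit process
in the class (D). -/
theorem classD_complete {Ω : Type*} {mΩ : MeasurableSpace Ω}
    (P : Measure Ω) [IsProbabilityMeasure P] (T : ℝ) (hT : 0 < T) (k : ℕ)
    (ℱ : Filtration ℝ mΩ)
    (hcomplete : ∀ t : ℝ, ∀ s : Set Ω, MeasurableSet s → P s = 0 → MeasurableSet[ℱ t] s)
    (hright : ∀ t : ℝ, ℱ t = ⨅ s ∈ Set.Ioi t, ℱ s)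
    (φ : ℕ → ℝ → Ω → EuclideanSpace ℝ (Fin k))
    (hAdapted : ∀ n, ∀ t ∈ Set.Icc (0 : ℝ) T, StronglyMeasurable[ℱ t] (φ n t))
    (hCont : ∀ n ω, ContinuousOn (fun t => φ n t ω) (Set.Icc (0 : ℝ) T))
    (hUI : ∀ n, UniformIntegrable
      (fun τ : {τ : Ω → ℝ // IsStoppingTime ℱ (fun ω => (τ ω : WithTop ℝ)) ∧ ∀ ω, τ ω ∈ Set.Icc (0 : ℝ) T} =>
        fun ω => φ n (τ.1 ω) ω) 1 P)
    (hCauchy : ∀ ε : ℝ, 0 < ε → ∃ N : ℕ, ∀ n ≥ N, ∀ m ≥ N,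
      ∀ τ : Ω → ℝ, IsStoppingTime ℱ (fun ω => (τ ω : WithTop ℝ)) → (∀ ω, τ ω ∈ Set.Icc (0 : ℝ) T) →
        ∫ ω, ‖φ n (τ ω) ω - φ m (τ ω) ω‖ ∂P ≤ ε) :
    ∃ φlim : ℝ → Ω → EuclideanSpace ℝ (Fin k),
      (∀ t ∈ Set.Icc (0 : ℝ) T, StronglyMeasurable[ℱ t] (φlim t)) ∧
      (∀ ω, ContinuousOn (fun t => φlim t ω) (Set.Icc (0 : ℝ) T)) ∧
      UniformIntegrable
        (fun τ : {τ : Ω → ℝ // IsStoppingTime ℱ (fun ω => (τ ω : WithTop ℝ)) ∧ ∀ ω, τ ω ∈ Set.Icc (0 : ℝ) T} =>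
          fun ω => φlim (τ.1 ω) ω) 1 P ∧
      (∀ ε : ℝ, 0 < ε → ∃ N : ℕ, ∀ n ≥ N,
        ∀ τ : Ω → ℝ, IsStoppingTime ℱ (fun ω => (τ ω : WithTop ℝ)) → (∀ ω, τ ω ∈ Set.Icc (0 : ℝ) T) →
          ∫ ω, ‖φ n (τ ω) ω - φlim (τ ω) ω‖ ∂P ≤ ε) :=
  classD_complete_general P T hT k ℱ hcomplete φ hAdapted hCont hUI hCauchy
end
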